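/- arXiv:2211.07739 — 4 statements merged into one kernel-verified Lean document; each statement's English description precedes it below -/
import Mathlib

section
/- Let p be a prime, let f(X) = a_r X^{n_r} + ... + a_1 X^{n_1} ∈ F_p[X] with nonzero coefficients a_1, ..., a_r ∈ F_p^* and integer exponents n_r > ... > n_1 ≥ 1, and let G ⊆ F_p^* be a subgroup of order τ. Then for any positive integers k and ℓ, |S(G;f)|^{2kℓ} ≤ p^r · τ^{2kℓ − 2k − 2ℓ} · Q_k(n⃗;G) · Q_ℓ(n⃗;G), where n⃗ = (n_1, ..., n_r). -/
open scoped Classical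

/-- `e_p(z) = exp(2πi z / p)`. -/
noncomputable def eP (p : ℕ) (z : ZMod p) : ℂ :=
  Complex.exp (2 * Real.pi * Complex.I * (z.val : ℂ) / (p : ℂ))

/-- `Q_k(n⃗; G)`: the number of `2k`-tuples `(g_1,…,g_{2k}) ∈ G^{2k}` with
`g_1^{n_i} + ⋯ + g_k^{n_i} = g_{k+1}^{n_i} + ⋯ + g_{2k}^{n_i}` for every `i`. -/
noncomputable def Qsys (p : ℕ) (G : Subgroup (ZMod p)ˣ) (k : ℕ) {r : ℕ} (nv : Fin r → ℕ) : ℕ :=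
  Nat.card {gh : (Fin k → G) × (Fin k → G) //
    ∀ i : Fin r, ∑ j, ((gh.1 j : (ZMod p)ˣ) : ZMod p) ^ nv i
      = ∑ j, ((gh.2 j : (ZMod p)ˣ) : ZMod p) ^ nv i}

/-! Substituting `g ↦ g h` in the Weil sum `S(c) = ∑_{g ∈ G} ψ(∑ c_i g^{n_i})` and averaging over
`h ∈ G` gives `τ S(a)^k = ∑_{x ∈ G^k} S(a · P(x))`, where `P(x)` is the vector of power sums of `x`.
Hölder bounds the `ℓ`-th power of the right side by `τ^{k(ℓ-1)} ∑_x |S(a · P(x))|^ℓ`; grouping the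
`x` by the value of `P(x)` and applying Cauchy–Schwarz bounds the square of this sum by `Q_k` times
`∑_u |S(u)|^{2ℓ}`, and orthogonality of additive characters evaluates the latter as `p^r Q_ℓ`. -/

open Finset

theorem sq_sum_comp_le_card_mul_sum_sq {α β : Type*} [Fintype α] [Fintype β] (f : α → β)
    (F : β → ℝ) :
    (∑ a, F (f a)) ^ 2 ≤ Nat.card {aa : α × α // f aa.1 = f aa.2} * ∑ b, F b ^ 2 := by
  set N : β → ℝ := fun b => Nat.card {a // f a = b}
  have sum_comp : ∀ H : β → ℝ, ∑ a, H (f a) = ∑ b, N b * H b := fun H => by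
    rw [← Fintype.sum_fiberwise' f H]
    simp [N, Nat.card_eq_fintype_card]
  have card_eq : (Nat.card {aa : α × α // f aa.1 = f aa.2} : ℝ) = ∑ b, N b ^ 2 := by
    rw [Nat.card_congr (Equiv.subtypeProdEquivSigmaSubtype fun x y => f x = f y),
      Nat.card_sigma]
    push_cast
    simp_rw [sq, ← sum_comp N]
    refine Fintype.sum_congr _ _ fun a => ?_
    exact congrArg _ (Nat.card_congr (Equiv.subtypeEquivRight fun _ => eq_comm))
  rw [sum_comp, card_eq]
  exact sum_mul_sq_le_sq_mul_sq _ _ _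

theorem sum_pow_mul_card_le {ι : Type*} (s : Finset ι) {f : ι → ℝ} (hf : ∀ i ∈ s, 0 ≤ f i)
    (n : ℕ) : (∑ i ∈ s, f i) ^ n * #s ≤ (#s : ℝ) ^ n * ∑ i ∈ s, f i ^ n := by
  cases n with
  | zero => simp
  | succ n =>
    rw [pow_succ' (#s : ℝ), mul_assoc, mul_comm]
    exact mul_le_mul_of_nonneg_left (pow_sum_le_card_mul_sum_pow hf n) (by positivity)

namespace AddChar

theorem map_sum_eq_prod {A M ι : Type*} [AddCommMonoid A] [CommMonoid M] (ψ : AddChar A M)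
    (s : Finset ι) (f : ι → A) : ψ (∑ i ∈ s, f i) = ∏ i ∈ s, ψ (f i) := by
  induction s using Finset.cons_induction with
  | empty => simp
  | cons i s hi ih => rw [sum_cons, prod_cons, map_add_eq_mul, ih]

theorem sum_apply_sum_mul {R R' ι : Type*} [CommRing R] [Fintype R] [CommRing R'] [IsDomain R']
    [Fintype ι] [DecidableEq ι] {ψ : AddChar R R'} (hψ : ψ.IsPrimitive) (d : ι → R) :
    ∑ c : ι → R, ψ (∑ i, c i * d i)
      = if d = 0 then (Fintype.card R : R') ^ Fintype.card ι else 0 := by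
  simp_rw [map_sum_eq_prod]
  rw [← Fintype.prod_sum fun i t => ψ (t * d i)]
  simp_rw [sum_mulShift _ hψ]
  simp [Fintype.prod_ite_zero, funext_iff]

end AddChar

section WeilSum

variable {R : Type*} [CommRing R] {r m : ℕ}

def powerSums {G : Subgroup Rˣ} (nv : Fin r → ℕ) (x : Fin m → G) : Fin r → R :=
  fun i => ∑ j, ((x j : Rˣ) : R) ^ nv i

noncomputable def powerSumsCollisions (G : Subgroup Rˣ) (m : ℕ) (nv : Fin r → ℕ) : ℕ :=
  Nat.card {xy : (Fin m → G) × (Fin m → G) // powerSums nv xy.1 = powerSums nv xy.2}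

def weilSum (ψ : AddChar R ℂ) (G : Subgroup Rˣ) [Fintype G] (nv : Fin r → ℕ)
    (c : Fin r → R) : ℂ :=
  ∑ g : G, ψ (∑ i, c i * ((g : Rˣ) : R) ^ nv i)

theorem powerSums_mul_const {G : Subgroup Rˣ} (nv : Fin r → ℕ) (x : Fin m → G) (g : G) :
    powerSums nv (x * fun _ => g) = powerSums nv x * fun i => ((g : Rˣ) : R) ^ nv i := by
  ext i
  simp [powerSums, mul_pow, sum_mul]

variable (ψ : AddChar R ℂ) (G : Subgroup Rˣ) [Fintype G] (nv : Fin r → ℕ)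

theorem weilSum_pow (c : Fin r → R) (m : ℕ) :
    weilSum ψ G nv c ^ m = ∑ x : Fin m → G, ψ (∑ i, c i * powerSums nv x i) := by
  rw [weilSum, ← Fin.prod_const, Fintype.prod_sum]
  refine Fintype.sum_congr _ _ fun x => ?_
  rw [← AddChar.map_sum_eq_prod, sum_comm]
  simp [powerSums, mul_sum]

theorem card_mul_weilSum_pow (c : Fin r → R) (m : ℕ) :
    (Fintype.card G : ℂ) * weilSum ψ G nv c ^ m
      = ∑ x : Fin m → G, weilSum ψ G nv (c * powerSums nv x) := by
  have shift (g : G) : weilSum ψ G nv c ^ m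
      = ∑ x : Fin m → G, ψ (∑ i, c i * powerSums nv x i * ((g : Rˣ) : R) ^ nv i) := by
    rw [weilSum_pow, ← Equiv.sum_comp (Equiv.mulRight fun _ : Fin m => g)]
    simp only [Equiv.coe_mulRight, powerSums_mul_const, Pi.mul_apply, mul_assoc]
  rw [← nsmul_eq_mul, ← card_univ, ← sum_const, Fintype.sum_congr _ _ shift, sum_comm]
  rfl

theorem norm_weilSum_pow_two_mul_eq_sum [Finite R] (c : Fin r → R) (m : ℕ) :
    (‖weilSum ψ G nv c‖ ^ (2 * m) : ℂ)
      = ∑ x : Fin m → G, ∑ y : Fin m → G, ψ (∑ i, c i * (powerSums nv x - powerSums nv y) i) := by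
  rw [pow_mul', ← Complex.ofReal_pow, ← norm_pow, ← Complex.mul_conj', weilSum_pow, map_sum,
    sum_mul_sum]
  refine Fintype.sum_congr _ _ fun x => Fintype.sum_congr _ _ fun y => ?_
  rw [← AddChar.map_neg_eq_conj, ← AddChar.map_add_eq_mul, ← sum_neg_distrib, ← sum_add_distrib]
  simp only [Pi.sub_apply, mul_sub, ← sub_eq_add_neg]

theorem sum_norm_weilSum_pow_two_mul [Fintype R] (hψ : ψ.IsPrimitive) (m : ℕ) :
    ∑ c : Fin r → R, ‖weilSum ψ G nv c‖ ^ (2 * m)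
      = (Fintype.card R : ℝ) ^ r * powerSumsCollisions G m nv := by
  apply Complex.ofReal_injective
  push_cast
  simp_rw [norm_weilSum_pow_two_mul_eq_sum]
  rw [sum_comm]
  simp_rw [sum_comm (γ := Fin r → R), AddChar.sum_apply_sum_mul hψ, sub_eq_zero, Fintype.card_fin]
  rw [powerSumsCollisions, Nat.card_eq_fintype_card, Fintype.card_subtype, ← Fintype.sum_prod_type',
    ← sum_filter, sum_const, nsmul_eq_mul, mul_comm]

end WeilSum

section Bounds

variable {R : Type*} [CommRing R] [Fintype R] {r : ℕ}
variable {ψ : AddChar R ℂ} (G : Subgroup Rˣ) [Fintype G] (nv : Fin r → ℕ)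

theorem sq_sum_norm_weilSum_units_mul_pow_le (hψ : ψ.IsPrimitive) (a : Fin r → Rˣ) (k ℓ : ℕ) :
    (∑ x : Fin k → G, ‖weilSum ψ G nv ((fun i => (a i : R)) * powerSums nv x)‖ ^ ℓ) ^ 2
      ≤ powerSumsCollisions G k nv * ((Fintype.card R : ℝ) ^ r * powerSumsCollisions G ℓ nv) := by
  refine (sq_sum_comp_le_card_mul_sum_sq (powerSums nv)
    fun u => ‖weilSum ψ G nv ((fun i => (a i : R)) * u)‖ ^ ℓ).trans_eq ?_
  rw [powerSumsCollisions, ← sum_norm_weilSum_pow_two_mul ψ G nv hψ ℓ]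
  simp_rw [← pow_mul, mul_comm ℓ 2]
  congr 1
  exact Fintype.sum_equiv (Equiv.piCongrRight fun i => Units.mulLeft (a i)) _ _ fun _ => rfl

theorem norm_weilSum_pow_mul_card_pow_le (hψ : ψ.IsPrimitive) (a : Fin r → Rˣ) (k ℓ : ℕ) :
    ‖weilSum ψ G nv (fun i => a i)‖ ^ (2 * k * ℓ) * (Fintype.card G : ℝ) ^ (2 * k + 2 * ℓ)
      ≤ (Fintype.card R : ℝ) ^ r * (Fintype.card G : ℝ) ^ (2 * k * ℓ)
        * powerSumsCollisions G k nv * powerSumsCollisions G ℓ nv := by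
  set τ : ℝ := (Fintype.card G : ℝ)
  set T : (Fin k → G) → ℝ := fun x => ‖weilSum ψ G nv ((fun i => (a i : R)) * powerSums nv x)‖
  have average : τ * ‖weilSum ψ G nv (fun i => a i)‖ ^ k ≤ ∑ x, T x := by
    calc τ * ‖weilSum ψ G nv (fun i => a i)‖ ^ k
        = ‖(Fintype.card G : ℂ) * weilSum ψ G nv (fun i => a i) ^ k‖ := by simp [τ, norm_pow]
      _ ≤ ∑ x, T x := by rw [card_mul_weilSum_pow]; exact norm_sum_le _ _
  have holder : (∑ x, T x) ^ ℓ * τ ^ k ≤ (τ ^ k) ^ ℓ * ∑ x, T x ^ ℓ := by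
    have := sum_pow_mul_card_le univ (f := T) (fun x _ => norm_nonneg _) ℓ
    rwa [card_univ, Fintype.card_fun, Fintype.card_fin, Nat.cast_pow] at this
  calc ‖weilSum ψ G nv (fun i => a i)‖ ^ (2 * k * ℓ) * τ ^ (2 * k + 2 * ℓ)
      = ((τ * ‖weilSum ψ G nv (fun i => a i)‖ ^ k) ^ ℓ * τ ^ k) ^ 2 := by ring
    _ ≤ ((∑ x, T x) ^ ℓ * τ ^ k) ^ 2 := by gcongr
    _ ≤ ((τ ^ k) ^ ℓ * ∑ x, T x ^ ℓ) ^ 2 := by gcongr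
    _ = τ ^ (2 * k * ℓ) * (∑ x, T x ^ ℓ) ^ 2 := by ring
    _ ≤ τ ^ (2 * k * ℓ) * (powerSumsCollisions G k nv
          * ((Fintype.card R : ℝ) ^ r * powerSumsCollisions G ℓ nv)) := by
      gcongr
      exact sq_sum_norm_weilSum_units_mul_pow_le G nv hψ a k ℓ
    _ = _ := by ring

end Bounds

theorem eP_eq_stdAddChar (p : ℕ) [NeZero p] (z : ZMod p) : eP p z = ZMod.stdAddChar z := by
  rw [ZMod.stdAddChar_apply, ZMod.toCircle_apply]
  rfl

theorem Qsys_eq_powerSumsCollisions (p : ℕ) (G : Subgroup (ZMod p)ˣ) (m : ℕ) {r : ℕ}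
    (nv : Fin r → ℕ) : Qsys p G m nv = powerSumsCollisions G m nv :=
  Nat.card_congr (Equiv.subtypeEquivRight fun _ => funext_iff.symm)

theorem weil_sum_pow_le_moments_general (p : ℕ) [Fact p.Prime] (r : ℕ)
    (a : Fin r → (ZMod p)ˣ) (nv : Fin r → ℕ)
    (G : Subgroup (ZMod p)ˣ) (k ℓ : ℕ) :
    ‖∑ g : G,
        eP p (∑ i, (a i : ZMod p) * ((g : (ZMod p)ˣ) : ZMod p) ^ nv i)‖ ^ (2 * k * ℓ)
      ≤ (p : ℝ) ^ r * (Nat.card G : ℝ) ^ (2 * (k : ℤ) * ℓ - 2 * k - 2 * ℓ)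
        * (Qsys p G k nv : ℝ) * (Qsys p G ℓ nv : ℝ) := by
  have hS : weilSum ZMod.stdAddChar G nv (fun i => a i)
      = ∑ g : G, eP p (∑ i, (a i : ZMod p) * ((g : (ZMod p)ˣ) : ZMod p) ^ nv i) := by
    simp only [weilSum, eP_eq_stdAddChar]
  have bound := norm_weilSum_pow_mul_card_pow_le G nv (ZMod.isPrimitive_stdAddChar p) a k ℓ
  rw [hS, ZMod.card, ← Nat.card_eq_fintype_card, ← Qsys_eq_powerSumsCollisions,
    ← Qsys_eq_powerSumsCollisions] at bound
  have hτ : (0 : ℝ) < Nat.card G := by exact_mod_cast Nat.card_pos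
  rw [← mul_le_mul_iff_of_pos_right (pow_pos hτ (2 * k + 2 * ℓ))]
  refine bound.trans_eq ?_
  have split : (Nat.card G : ℝ) ^ (2 * k * ℓ)
      = (Nat.card G : ℝ) ^ (2 * (k : ℤ) * ℓ - 2 * k - 2 * ℓ)
        * (Nat.card G : ℝ) ^ (2 * k + 2 * ℓ) := by
    rw [← zpow_natCast, ← zpow_natCast, ← zpow_add₀ hτ.ne']
    push_cast
    ring_nf
  rw [split]
  ring

/-- For `f(X) = a_r X^{n_r} + ⋯ + a_1 X^{n_1}` with nonzero coefficients and exponents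
`n_r > ⋯ > n_1 ≥ 1`, a subgroup `G ⊆ F_p^*` of order `τ` and positive integers `k, ℓ`:
`|S(G;f)|^{2kℓ} ≤ p^r τ^{2kℓ−2k−2ℓ} Q_k(n⃗;G) Q_ℓ(n⃗;G)`. -/
theorem weil_sum_pow_le_moments (p : ℕ) [Fact p.Prime] (r : ℕ) (hr : 1 ≤ r)
    (a : Fin r → (ZMod p)ˣ) (nv : Fin r → ℕ) (hmono : StrictMono nv) (h1 : ∀ i, 1 ≤ nv i)
    (G : Subgroup (ZMod p)ˣ) (k ℓ : ℕ) (hk : 0 < k) (hℓ : 0 < ℓ) :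
    ‖∑ g : G,
        eP p (∑ i, (a i : ZMod p) * ((g : (ZMod p)ˣ) : ZMod p) ^ nv i)‖ ^ (2 * k * ℓ)
      ≤ (p : ℝ) ^ r * (Nat.card G : ℝ) ^ (2 * (k : ℤ) * ℓ - 2 * k - 2 * ℓ)
        * (Qsys p G k nv : ℝ) * (Qsys p G ℓ nv : ℝ) :=
  weil_sum_pow_le_moments_general p r a nv G k ℓ
end

section
/- Let p be a prime, let n > m > 0 be integers with d = gcd(m,n), and set e = gcd(d, p−1). Then for every positive integer s, T_3(m,n;s) ≤ e^6 · T_3(m/d, n/d; s). -/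
/-- `T_3(m,n;s)`: the number of 6-tuples `(x_1,…,x_6) ∈ (F_p^*)^6` with
`x_1^{sm} + x_2^{sm} + x_3^{sm} = x_4^{sm} + x_5^{sm} + x_6^{sm}` and
`x_1^{sn} + x_2^{sn} + x_3^{sn} = x_4^{sn} + x_5^{sn} + x_6^{sn}`. -/
noncomputable def T3 (p m n s : ℕ) : ℕ :=
  Nat.card {x : (Fin 3 → (ZMod p)ˣ) × (Fin 3 → (ZMod p)ˣ) //
    (∑ j, ((x.1 j : ZMod p)) ^ (s * m) = ∑ j, ((x.2 j : ZMod p)) ^ (s * m)) ∧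
    (∑ j, ((x.1 j : ZMod p)) ^ (s * n) = ∑ j, ((x.2 j : ZMod p)) ^ (s * n))}

/-!
Raising every coordinate to the `d`-th power sends a solution for `(m, n)` to a solution for
`(m/d, n/d)`, since `(x^d)^{s(m/d)} = x^{sm}`. This is a homomorphism of the group
`((𝔽_p^*)^3)^2`, so each fibre is empty or a coset of its kernel, the `d`-torsion, which has
`e^6` elements: `𝔽_p^*` is cyclic of order `p - 1`, so exactly `e = gcd(d, p - 1)` of its
elements satisfy `u^d = 1`.
-/

open Finset

section Monoid

variable {M N ι : Type*} [Monoid M] [Monoid N]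

theorem card_pow_eq_one_prod (d : ℕ) :
    Nat.card {x : M × N // x ^ d = 1} =
      Nat.card {a : M // a ^ d = 1} * Nat.card {b : N // b ^ d = 1} := by
  rw [← Nat.card_prod]
  exact Nat.card_congr <| (Equiv.subtypeEquivRight fun x => by simp [Prod.ext_iff]).trans
    Equiv.subtypeProdEquivProd

theorem card_pow_eq_one_pi [Finite ι] (d : ℕ) :
    Nat.card {f : ι → M // f ^ d = 1} = Nat.card {a : M // a ^ d = 1} ^ Nat.card ι := by
  rw [← Nat.card_fun]
  exact Nat.card_congr <| (Equiv.subtypeEquivRight fun f => by simp [funext_iff]).trans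
    Equiv.subtypePiEquivPi

end Monoid

section CommGroup

variable {G : Type*} [CommGroup G] [Finite G]

theorem card_pow_eq_le_card_pow_eq_one (d : ℕ) (b : G) :
    Nat.card {x : G // x ^ d = b} ≤ Nat.card {x : G // x ^ d = 1} := by
  rcases isEmpty_or_nonempty {x : G // x ^ d = b} with h | ⟨x₀, hx₀⟩
  · simp
  refine Nat.card_le_card_of_injective
    (fun x => ⟨x.1 * x₀⁻¹, by rw [mul_pow, inv_pow, x.2, hx₀, mul_inv_cancel]⟩) ?_
  intro x y hxy
  exact Subtype.ext (mul_right_cancel (congrArg Subtype.val hxy))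

theorem card_le_card_pow_eq_one_mul {P Q : G → Prop} (d : ℕ) (h : ∀ x, P x → Q (x ^ d)) :
    Nat.card {x // P x} ≤ Nat.card {x : G // x ^ d = 1} * Nat.card {x // Q x} := by
  classical
  have := Fintype.ofFinite G
  simp only [Nat.card_eq_fintype_card, Fintype.card_subtype]
  refine card_le_mul_card_image_of_maps_to (f := (· ^ d)) (by simpa using h) _ fun b _ => ?_
  calc #{x ∈ {x | P x} | x ^ d = b} ≤ #{x : G | x ^ d = b} :=
        card_le_card (monotone_filter_left _ (filter_subset _ _))
    _ ≤ #{x : G | x ^ d = 1} := by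
        simpa only [Nat.card_eq_fintype_card, Fintype.card_subtype] using
          card_pow_eq_le_card_pow_eq_one d b

end CommGroup

theorem ZMod.card_units_pow_eq_one (p : ℕ) [Fact p.Prime] (d : ℕ) :
    Nat.card {u : (ZMod p)ˣ // u ^ d = 1} = Nat.gcd d (p - 1) := by
  have hker : Nat.card (powMonoidHom d : (ZMod p)ˣ →* (ZMod p)ˣ).ker =
      Nat.card {u : (ZMod p)ˣ // u ^ d = 1} := rfl
  rw [← hker, IsCyclic.card_powMonoidHom_ker, Nat.card_eq_fintype_card, ZMod.card_units,
    Nat.gcd_comm]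

section PowerSums

variable {R ι : Type*} [CommSemiring R] [Fintype ι]

def PowerSumsEq (k : ℕ) (x : (ι → Rˣ) × (ι → Rˣ)) : Prop :=
  ∑ j, (x.1 j : R) ^ k = ∑ j, (x.2 j : R) ^ k

theorem powerSumsEq_pow_iff (d k : ℕ) (x : (ι → Rˣ) × (ι → Rˣ)) :
    PowerSumsEq k (x ^ d) ↔ PowerSumsEq (d * k) x := by
  simp [PowerSumsEq, pow_mul]

end PowerSums

theorem T3_eq_card_powerSumsEq (p m n s : ℕ) :
    T3 p m n s = Nat.card {x : (Fin 3 → (ZMod p)ˣ) × (Fin 3 → (ZMod p)ˣ) //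
      PowerSumsEq (s * m) x ∧ PowerSumsEq (s * n) x} :=
  rfl

theorem T3_reduce_gcd_general (p : ℕ) (hp : p.Prime) (m n : ℕ) (hm : 0 < m)
    (d e : ℕ) (hd : d = Nat.gcd m n) (he : e = Nat.gcd d (p - 1)) (s : ℕ) :
    T3 p m n s ≤ e ^ 6 * T3 p (m / d) (n / d) s := by
  have : Fact p.Prime := ⟨hp⟩
  have hd0 : 0 < d := hd ▸ Nat.gcd_pos_of_pos_left n hm
  obtain ⟨m', rfl⟩ : d ∣ m := hd ▸ Nat.gcd_dvd_left m n
  obtain ⟨n', rfl⟩ : d ∣ n := hd ▸ Nat.gcd_dvd_right _ n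
  have htorsion : Nat.card {x : (Fin 3 → (ZMod p)ˣ) × (Fin 3 → (ZMod p)ˣ) // x ^ d = 1} =
      e ^ 6 := by
    rw [card_pow_eq_one_prod, card_pow_eq_one_pi, ZMod.card_units_pow_eq_one, Nat.card_fin,
      ← he, ← pow_add]
  rw [Nat.mul_div_cancel_left _ hd0, Nat.mul_div_cancel_left _ hd0, ← htorsion,
    T3_eq_card_powerSumsEq, T3_eq_card_powerSumsEq]
  exact card_le_card_pow_eq_one_mul d fun x hx => by
    simpa only [powerSumsEq_pow_iff, mul_left_comm d s] using hx

/-- With `d = gcd(m,n)` and `e = gcd(d, p−1)`, one has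
`T_3(m,n;s) ≤ e^6 T_3(m/d, n/d; s)`. -/
theorem T3_reduce_gcd (p : ℕ) (hp : p.Prime) (m n : ℕ) (hm : 0 < m) (hmn : m < n)
    (d e : ℕ) (hd : d = Nat.gcd m n) (he : e = Nat.gcd d (p - 1)) (s : ℕ) (hs : 0 < s) :
    T3 p m n s ≤ e ^ 6 * T3 p (m / d) (n / d) s :=
  T3_reduce_gcd_general p hp m n hm d e hd he s
end

section
/- There exists an absolute constant c > 0 such that for every real ε with 0 < ε < 1/2 and every integer n ≥ 2, η_n(ε) ≥ c · (7ε/9)^{n−1} / (n−2)!. -/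
/-- The sequence `η_n(ε)`: `η_1(ε) = η_2(ε) = 7ε/27`, and for `n ≥ 3`,
`η_n(ε) = 7ε / (18 κ_n(ε))` where `κ_n(ε) = ⌈(n−2−7ε/3)/(2η_{n−1}(ε)) + 3⌉`. -/
noncomputable def etaSeq : ℕ → ℝ → ℝ
  | 0, _ => 0
  | 1, ε => 7 * ε / 27
  | 2, ε => 7 * ε / 27
  | n + 3, ε =>
      7 * ε / (18 * (⌈(((n : ℝ) + 3) - 2 - 7 * ε / 3) / (2 * etaSeq (n + 2) ε) + 3⌉ : ℝ))

/-!
Writing `r = 7ε/9`, the ceiling in `κ_n` gives `2 κ_n η_{n-1} < (n - 2) + 8 η_{n-1}`, hence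
`η_n ((n - 2) + 8 η_{n-1}) ≥ r η_{n-1}`: the normalised sequence `b_m = η_{m+2} m! / r^{m+1}` loses
at most a factor `1 + 8 η_{m+2}` per step. Since `κ_n ≥ 3` also forces `η_n ≤ η_{n-1} / 2`, these
factors have a bounded product, `∏ (1 + 8 η_{m+2}) ≤ exp (∑ 8 η_{m+2}) ≤ exp 3 < 27`, and so
`b_m ≥ b_0 / 27 = 1/81`.
-/

open Finset Real

/-- `kappaSeq m ε` is the paper's `κ_{m+3}(ε)`. -/
noncomputable def kappaSeq (m : ℕ) (ε : ℝ) : ℤ :=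
  ⌈(((m : ℝ) + 3) - 2 - 7 * ε / 3) / (2 * etaSeq (m + 2) ε) + 3⌉

theorem le_mul_exp_sum_of_le_mul_one_add {b x : ℕ → ℝ} (hb : ∀ m, 0 ≤ b m)
    (hstep : ∀ m, b m ≤ b (m + 1) * (1 + x m)) (m : ℕ) :
    b 0 ≤ b m * exp (∑ k ∈ range m, x k) := by
  induction m with
  | zero => simp
  | succ m ih =>
    calc b 0 ≤ b m * exp (∑ k ∈ range m, x k) := ih
      _ ≤ b (m + 1) * (1 + x m) * exp (∑ k ∈ range m, x k) := by
        gcongr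
        exact hstep m
      _ ≤ b (m + 1) * exp (x m) * exp (∑ k ∈ range m, x k) := by
        gcongr
        · exact hb _
        · linarith [add_one_le_exp (x m)]
      _ = b (m + 1) * exp (∑ k ∈ range (m + 1), x k) := by
        rw [sum_range_succ, exp_add]
        ring

namespace etaSeq

variable {ε : ℝ}

theorem two_eq (ε : ℝ) : etaSeq 2 ε = 7 * ε / 27 := rfl

theorem add_three_eq (m : ℕ) (ε : ℝ) : etaSeq (m + 3) ε = 7 * ε / (18 * kappaSeq m ε) := rfl

theorem three_le_kappaSeq (hε0 : 0 < ε) (hε : ε < 1 / 2) {m : ℕ} (hη : 0 < etaSeq (m + 2) ε) :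
    (3 : ℝ) ≤ kappaSeq m ε := by
  have hceil : (2 : ℤ) < kappaSeq m ε := by
    rw [kappaSeq, Int.lt_ceil]
    push_cast
    suffices -1 < ((m : ℝ) + 3 - 2 - 7 * ε / 3) / (2 * etaSeq (m + 2) ε) by linarith
    rcases m with _ | m
    -- the numerator of `κ_3` is negative for `ε > 3/7`; it stays above `-2 η_2` as `ε < 27/49`
    · rw [two_eq, lt_div_iff₀ (by positivity)]
      push_cast
      linarith
    · have : (0 : ℝ) ≤ ((m + 1 : ℕ) : ℝ) + 3 - 2 - 7 * ε / 3 := by push_cast; linarith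
      linarith [div_nonneg this (by positivity : (0 : ℝ) ≤ 2 * etaSeq (m + 1 + 2) ε)]
  exact_mod_cast hceil

theorem pos (hε0 : 0 < ε) (hε : ε < 1 / 2) (m : ℕ) : 0 < etaSeq (m + 2) ε := by
  induction m with
  | zero => rw [two_eq]; positivity
  | succ m ih =>
    have := three_le_kappaSeq hε0 hε ih
    rw [add_three_eq]
    positivity

theorem kappaSeq_mul_lt (hε0 : 0 < ε) (hε : ε < 1 / 2) (m : ℕ) :
    2 * etaSeq (m + 2) ε * kappaSeq m ε < (m + 1) + 8 * etaSeq (m + 2) ε := by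
  have hη := pos hε0 hε m
  have hceil := Int.ceil_lt_add_one
    ((((m : ℝ) + 3) - 2 - 7 * ε / 3) / (2 * etaSeq (m + 2) ε) + 3)
  rw [← kappaSeq] at hceil
  have hX : (((m : ℝ) + 3) - 2 - 7 * ε / 3) / (2 * etaSeq (m + 2) ε) * (2 * etaSeq (m + 2) ε)
      = ((m : ℝ) + 3) - 2 - 7 * ε / 3 := div_mul_cancel₀ _ (by positivity)
  nlinarith [mul_lt_mul_of_pos_right hceil (by positivity : (0 : ℝ) < 2 * etaSeq (m + 2) ε)]

theorem le_kappaSeq_mul (hε0 : 0 < ε) (hε : ε < 1 / 2) (m : ℕ) :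
    14 * ε / 9 ≤ 2 * etaSeq (m + 2) ε * kappaSeq m ε := by
  have hη := pos hε0 hε m
  have hκ := three_le_kappaSeq hε0 hε hη
  rcases m with _ | m
  · rw [two_eq] at hη ⊢
    nlinarith
  · have hceil := Int.le_ceil
      (((((m + 1 : ℕ) : ℝ) + 3) - 2 - 7 * ε / 3) / (2 * etaSeq (m + 1 + 2) ε) + 3)
    rw [← kappaSeq] at hceil
    have hX : (((m + 1 : ℕ) : ℝ) + 3 - 2 - 7 * ε / 3) / (2 * etaSeq (m + 1 + 2) ε)
        * (2 * etaSeq (m + 1 + 2) ε) = ((m + 1 : ℕ) : ℝ) + 3 - 2 - 7 * ε / 3 :=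
      div_mul_cancel₀ _ (by positivity)
    push_cast at hceil hX
    nlinarith [mul_le_mul_of_nonneg_right hceil (by positivity : (0 : ℝ) ≤ 2 * etaSeq (m + 1 + 2) ε)]

theorem add_three_le_half (hε0 : 0 < ε) (hε : ε < 1 / 2) (m : ℕ) :
    etaSeq (m + 3) ε ≤ etaSeq (m + 2) ε / 2 := by
  have hκ := three_le_kappaSeq hε0 hε (pos hε0 hε m)
  rw [add_three_eq, div_le_div_iff₀ (by positivity) two_pos]
  linarith [le_kappaSeq_mul hε0 hε m]

theorem le_geometric (hε0 : 0 < ε) (hε : ε < 1 / 2) (m : ℕ) :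
    etaSeq (m + 2) ε ≤ 7 * ε / 27 * (1 / 2) ^ m := by
  induction m with
  | zero => simp [two_eq]
  | succ m ih =>
    rw [pow_succ]
    linarith [add_three_le_half hε0 hε m]

theorem mul_le_add_three_mul (hε0 : 0 < ε) (hε : ε < 1 / 2) (m : ℕ) :
    7 * ε / 9 * etaSeq (m + 2) ε ≤ etaSeq (m + 3) ε * ((m + 1) + 8 * etaSeq (m + 2) ε) := by
  have hκ := three_le_kappaSeq hε0 hε (pos hε0 hε m)
  calc 7 * ε / 9 * etaSeq (m + 2) ε
      = etaSeq (m + 3) ε * (2 * etaSeq (m + 2) ε * kappaSeq m ε) := by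
        rw [add_three_eq]
        field_simp
        ring
    _ ≤ etaSeq (m + 3) ε * ((m + 1) + 8 * etaSeq (m + 2) ε) := by
        have := pos hε0 hε (m + 1)
        gcongr
        exact (kappaSeq_mul_lt hε0 hε m).le

noncomputable def normalized (ε : ℝ) (m : ℕ) : ℝ :=
  etaSeq (m + 2) ε * m.factorial / (7 * ε / 9) ^ (m + 1)

theorem normalized_le_succ_mul (hε0 : 0 < ε) (hε : ε < 1 / 2) (m : ℕ) :
    normalized ε m ≤ normalized ε (m + 1) * (1 + 8 * etaSeq (m + 2) ε) := by
  have hη := pos hε0 hε m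
  have hη' := pos hε0 hε (m + 1)
  have hstep := mul_le_add_three_mul hε0 hε m
  have hm : (0 : ℝ) ≤ m := m.cast_nonneg
  have hslack : etaSeq (m + 3) ε * ((m + 1) + 8 * etaSeq (m + 2) ε)
      ≤ etaSeq (m + 3) ε * ((m + 1) * (1 + 8 * etaSeq (m + 2) ε)) := by
    gcongr
    nlinarith
  simp only [normalized, Nat.factorial_succ, pow_succ]
  rw [div_mul_eq_mul_div, div_le_div_iff₀ (by positivity) (by positivity)]
  push_cast
  have hF : (0 : ℝ) < m.factorial := by positivity
  have hr : (0 : ℝ) < (7 * ε / 9) ^ m := by positivity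
  nlinarith [mul_le_mul_of_nonneg_right (hstep.trans hslack) (mul_pos hF hr).le]

theorem one_div_eightyOne_le_normalized (hε0 : 0 < ε) (hε : ε < 1 / 2) (m : ℕ) :
    1 / 81 ≤ normalized ε m := by
  have hsum : ∑ k ∈ range m, 8 * etaSeq (k + 2) ε ≤ 3 :=
    calc ∑ k ∈ range m, 8 * etaSeq (k + 2) ε
        ≤ ∑ k ∈ range m, 8 * (7 * ε / 27 * (1 / 2) ^ k) := by
          gcongr with k
          exact le_geometric hε0 hε k
      _ = 8 * (7 * ε / 27) * ∑ k ∈ range m, (1 / 2 : ℝ) ^ k := by simp only [← mul_sum]; ring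
      _ ≤ 8 * (7 * ε / 27) * 2 := by gcongr; exact sum_geometric_two_le m
      _ ≤ 3 := by linarith
  have hexp : exp 3 < 27 := by
    have : exp 3 = exp 1 ^ 3 := by rw [← exp_nat_mul]; norm_num
    rw [this]
    calc exp 1 ^ 3 < 3 ^ 3 := pow_lt_pow_left₀ exp_one_lt_three (exp_pos 1).le (by norm_num)
      _ = 27 := by norm_num
  have hb : ∀ k, 0 ≤ normalized ε k := fun k => by
    have := pos hε0 hε k
    unfold normalized
    positivity
  have hgronwall := le_mul_exp_sum_of_le_mul_one_add hb (normalized_le_succ_mul hε0 hε) m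
  have h0 : normalized ε 0 = 1 / 3 := by
    simp only [normalized, zero_add, two_eq]
    field_simp
    norm_num
  rw [h0] at hgronwall
  nlinarith [exp_le_exp.mpr hsum, hb m]

end etaSeq

/-- There is an absolute constant `c > 0` such that for every `0 < ε < 1/2` and every
`n ≥ 2`, `η_n(ε) ≥ c (7ε/9)^{n−1} / (n−2)!`. -/
theorem etaSeq_lower_bound :
    ∃ c : ℝ, 0 < c ∧ ∀ ε : ℝ, 0 < ε → ε < 1 / 2 → ∀ n : ℕ, 2 ≤ n →
      c * (7 * ε / 9) ^ (n - 1) / (Nat.factorial (n - 2) : ℝ) ≤ etaSeq n ε := by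
  refine ⟨1 / 81, by norm_num, fun ε hε0 hε n hn => ?_⟩
  obtain ⟨m, rfl⟩ := Nat.exists_eq_add_of_le' hn
  have hb := etaSeq.one_div_eightyOne_le_normalized hε0 hε m
  rw [etaSeq.normalized, le_div_iff₀ (by positivity)] at hb
  rw [show m + 2 - 1 = m + 1 by omega, Nat.add_sub_cancel, div_le_iff₀ (by positivity)]
  linarith
end

section
/- For all integers n > m ≥ 1, the identity (Y^m − 1)^n − Y^{mn} = Π_{ξ : ξ^n = 1} ( (1 − ξ) Y^m − 1 ) holds in C[Y], where the product ranges over the n-th roots of unity ξ in C; moreover this polynomial is squarefree and its factors (1 − ξ)Y^m − 1 are pairwise coprime. -/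
/-!
Substituting `x = Yᵐ - 1`, `y = Yᵐ` into `xⁿ - yⁿ = ∏_{ξⁿ = 1} (x - ξ y)` gives the factorization.
Distinct factors `f = a Yᵐ - 1` and `g = b Yᵐ - 1` are coprime because `b f - a g = a - b`, and
each factor is separable because of Euler's relation `Y f' - m f = m`. A product of pairwise
coprime separable polynomials is separable, hence squarefree.
-/

open Polynomial

theorem IsPrimitiveRoot.pow_sub_pow_eq_prod_sub_C_mul {K : Type*} [CommRing K] [IsDomain K]
    [Infinite K] {ζ : K} {n : ℕ} (hζ : IsPrimitiveRoot ζ n) (hn : 0 < n) (p q : K[X]) :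
    p ^ n - q ^ n = ∏ ξ ∈ nthRootsFinset n (1 : K), (p - C ξ * q) :=
  Polynomial.funext fun x => by
    simpa only [eval_sub, eval_pow, eval_prod, eval_mul, eval_C]
      using hζ.pow_sub_pow_eq_prod_sub_mul (p.eval x) (q.eval x) hn

namespace Polynomial

variable {K : Type*} [Field K]

theorem isCoprime_C_mul_X_pow_sub_one {a b : K} (hab : a ≠ b) (m : ℕ) :
    IsCoprime (C a * X ^ m - 1 : K[X]) (C b * X ^ m - 1) := by
  have hinv : C (a - b)⁻¹ * C (a - b) = (1 : K[X]) := by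
    rw [← map_mul, inv_mul_cancel₀ (sub_ne_zero.2 hab), map_one]
  refine ⟨C (a - b)⁻¹ * C b, -(C (a - b)⁻¹ * C a), ?_⟩
  linear_combination (norm := (simp only [map_sub]; ring)) hinv

theorem separable_C_mul_X_pow_sub_one {m : ℕ} (hm : (m : K) ≠ 0) (a : K) :
    (C a * X ^ m - 1 : K[X]).Separable := by
  obtain ⟨k, rfl⟩ : ∃ k, m = k + 1 :=
    Nat.exists_eq_add_one_of_ne_zero (by rintro rfl; exact hm Nat.cast_zero)
  have hinv : C ((k + 1 : ℕ) : K)⁻¹ * C ((k + 1 : ℕ) : K) = (1 : K[X]) := by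
    rw [← map_mul, inv_mul_cancel₀ hm, map_one]
  refine ⟨-1, C ((k + 1 : ℕ) : K)⁻¹ * X, ?_⟩
  simp only [derivative_sub, derivative_C_mul_X_pow, derivative_one, sub_zero,
    add_tsub_cancel_right]
  linear_combination (norm := (simp only [map_mul]; ring)) C a * X ^ (k + 1) * hinv

end Polynomial

/-- In `ℂ[Y]`: `(Y^m − 1)^n − Y^{mn} = ∏_{ξ^n = 1} ((1 − ξ) Y^m − 1)`, the product being
over the `n`-th roots of unity in `ℂ`; moreover this polynomial is squarefree and the
factors `(1 − ξ) Y^m − 1` are pairwise coprime. -/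
theorem factorization_squarefree_coprime (m n : ℕ) (hm : 1 ≤ m) (hmn : m < n) :
    ((X ^ m - 1 : Polynomial ℂ) ^ n - X ^ (m * n)
        = ∏ ξ ∈ Polynomial.nthRootsFinset n (1 : ℂ), (C (1 - ξ) * X ^ m - 1))
      ∧ Squarefree ((X ^ m - 1 : Polynomial ℂ) ^ n - X ^ (m * n))
      ∧ ∀ ξ ζ : ℂ, ξ ^ n = 1 → ζ ^ n = 1 → ξ ≠ ζ →
          IsCoprime (C (1 - ξ) * X ^ m - 1 : Polynomial ℂ) (C (1 - ζ) * X ^ m - 1) := by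
  have hn : 0 < n := Nat.zero_lt_of_lt hmn
  have hcoprime (ξ ζ : ℂ) (hne : ξ ≠ ζ) :
      IsCoprime (C (1 - ξ) * X ^ m - 1 : ℂ[X]) (C (1 - ζ) * X ^ m - 1) :=
    isCoprime_C_mul_X_pow_sub_one (sub_right_injective.ne hne) m
  have hprod : (X ^ m - 1 : ℂ[X]) ^ n - X ^ (m * n)
      = ∏ ξ ∈ nthRootsFinset n (1 : ℂ), (C (1 - ξ) * X ^ m - 1) := by
    rw [pow_mul, (Complex.isPrimitiveRoot_exp n hn.ne').pow_sub_pow_eq_prod_sub_C_mul hn]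
    exact Finset.prod_congr rfl fun ξ _ => by rw [map_sub, map_one]; ring
  have hm' : (m : ℂ) ≠ 0 := Nat.cast_ne_zero.2 (Nat.one_le_iff_ne_zero.mp hm)
  refine ⟨hprod, ?_, fun ξ ζ _ _ => hcoprime ξ ζ⟩
  rw [hprod]
  exact (separable_prod' (fun ξ _ ζ _ => hcoprime ξ ζ)
    fun ξ _ => separable_C_mul_X_pow_sub_one hm' _).squarefree
end
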